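/- Let X be a Poisson random variable with parameter λ > 0 and Y an independent geometric random variable with parameter p ∈ (0,1), q = 1 − p, and set Z = X + Y. Then for every j ∈ ℤ₊, (j+1)·P(Z = j+1) = λ·P(Z = j) + ∑_{k=0}^{j} q^{j−k+1}·P(Z = k). -/

import Mathlib

open MeasureTheory ProbabilityTheory Finset

/-- `pm P X j` is the probability `P(X = j)` as a real number. -/
noncomputable def pm {Ω : Type*} [MeasurableSpace Ω] (P : Measure Ω) (X : Ω → ℕ) (j : ℕ) : ℝ :=
  (P {ω | X ω = j}).toReal

/-! The generating function of `X + Y` is `A * B`, where the Poisson series satisfies `A' = λ A`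
and the geometric series `B = p / (1 - q X)` satisfies `B' = q B / (1 - q X)`. Hence
`(A B)' = (λ + q / (1 - q X)) A B`, and comparing coefficients of `X ^ j` gives the recursion. -/

open PowerSeries

section PowerSeries

variable {R : Type*} [CommRing R]

theorem mk_pow_mul_one_sub_C_mul_X (q : R) : (mk fun n => q ^ n) * (1 - C q * X) = 1 := by
  simpa [rescale_mk, rescale_X] using congrArg (rescale q) (mk_one_mul_one_sub_eq_one R)

theorem derivative_mk_pow (q : R) :
    d⁄dX R (mk fun n => q ^ n) = C q * (mk fun n => q ^ n) ^ 2 := by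
  set G : R⟦X⟧ := mk fun n => q ^ n
  have hG := mk_pow_mul_one_sub_C_mul_X q
  have hdG := congrArg (d⁄dX R) hG
  simp only [Derivation.leibniz, map_sub, Derivation.map_one_eq_zero, derivative_X, smul_eq_mul,
    mul_one, derivative_C, mul_zero, add_zero, zero_sub, mul_neg] at hdG
  linear_combination (-(d⁄dX R G)) * hG + G * hdG

theorem derivative_mul_mk_pow_mul_C {A : R⟦X⟧} {lam : R} (hA : d⁄dX R A = C lam * A) (p q : R) :
    d⁄dX R (A * ((mk fun n => q ^ n) * C p)) =
      (C lam + C q * mk fun n => q ^ n) * (A * ((mk fun n => q ^ n) * C p)) := by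
  simp only [Derivation.leibniz, hA, derivative_mk_pow, derivative_C, smul_eq_mul]
  ring

theorem coeff_succ_mul_eq_of_derivative_eq {F : R⟦X⟧} {lam q : R}
    (hF : d⁄dX R F = (C lam + C q * mk fun n => q ^ n) * F) (j : ℕ) :
    (j + 1) * coeff (j + 1) F =
      lam * coeff j F + ∑ k ∈ range (j + 1), q ^ (j - k + 1) * coeff k F := by
  have h := congrArg (coeff j) hF
  rw [coeff_derivative, add_mul, map_add, coeff_C_mul, mul_assoc, coeff_C_mul,
    mul_comm (PowerSeries.mk _), coeff_mul,
    Nat.sum_antidiagonal_eq_sum_range_succ fun k l => coeff k F * coeff l (PowerSeries.mk _),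
    mul_sum] at h
  rw [mul_comm, h]
  congr 1
  refine sum_congr rfl fun k _ => ?_
  rw [coeff_mk]
  ring

end PowerSeries

theorem derivative_mk_mul_pow_div_factorial {K : Type*} [Field K] [CharZero K] (c lam : K) :
    d⁄dX K (mk fun n => c * lam ^ n / n.factorial) =
      C lam * mk fun n => c * lam ^ n / n.factorial := by
  ext n
  rw [coeff_derivative, coeff_C_mul, coeff_mk, coeff_mk, Nat.factorial_succ, Nat.cast_mul]
  field_simp
  push_cast
  ring

theorem pm_add_eq_sum_antidiagonal {Ω : Type*} [MeasurableSpace Ω] {P : Measure Ω}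
    [IsFiniteMeasure P] {X Y : Ω → ℕ} (hX : Measurable X) (hY : Measurable Y)
    (hindep : IndepFun X Y P) (n : ℕ) :
    pm P (fun ω => X ω + Y ω) n = ∑ ij ∈ antidiagonal n, pm P X ij.1 * pm P Y ij.2 := by
  have hfiber : {ω | X ω + Y ω = n} = ⋃ ij ∈ antidiagonal n, X ⁻¹' {ij.1} ∩ Y ⁻¹' {ij.2} := by
    ext ω
    simp
  have hdisj : (antidiagonal n : Set (ℕ × ℕ)).PairwiseDisjoint
      fun ij => X ⁻¹' {ij.1} ∩ Y ⁻¹' {ij.2} := by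
    intro ij _ kl _ hne
    refine Set.disjoint_left.mpr fun ω h₁ h₂ => hne ?_
    simp_all [Prod.ext_iff]
  simp only [pm, ← measureReal_def, hfiber]
  rw [measureReal_biUnion_finset hdisj fun ij _ =>
    (hX (measurableSet_singleton _)).inter (hY (measurableSet_singleton _))]
  refine sum_congr rfl fun ij _ => ?_
  rw [measureReal_def, hindep.measure_inter_preimage_eq_mul _ _ (measurableSet_singleton _)
    (measurableSet_singleton _), ENNReal.toReal_mul]
  rfl

theorem poisson_geometric_pmf_recursion_general {Ω : Type*} [MeasurableSpace Ω] (P : Measure Ω)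
    [IsProbabilityMeasure P] (lam p : ℝ)
    (X Y : Ω → ℕ) (hX : Measurable X) (hY : Measurable Y)
    (hXpmf : ∀ k : ℕ, pm P X k = Real.exp (-lam) * lam ^ k / k.factorial)
    (hYpmf : ∀ k : ℕ, pm P Y k = (1 - p) ^ k * p)
    (hindep : IndepFun X Y P) (j : ℕ) :
    ((j : ℝ) + 1) * pm P (fun ω => X ω + Y ω) (j + 1) =
      lam * pm P (fun ω => X ω + Y ω) j +
        ∑ k ∈ Finset.range (j + 1), (1 - p) ^ (j - k + 1) * pm P (fun ω => X ω + Y ω) k := by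
  set A : ℝ⟦X⟧ := mk fun n => Real.exp (-lam) * lam ^ n / n.factorial
  set B : ℝ⟦X⟧ := (mk fun n => (1 - p) ^ n) * C p
  have hZ (n : ℕ) : pm P (fun ω => X ω + Y ω) n = coeff n (A * B) := by
    rw [pm_add_eq_sum_antidiagonal hX hY hindep, coeff_mul]
    simp only [A, B, coeff_mul_C, coeff_mk, hXpmf, hYpmf]
  simp only [hZ]
  exact coeff_succ_mul_eq_of_derivative_eq
    (derivative_mul_mk_pow_mul_C (derivative_mk_mul_pow_div_factorial _ lam) p _) j

/-- The PMF recursion for `Z = X + Y` with `X` Poisson(λ) and `Y` an independent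
geometric(p) random variable (proved inside Proposition 3.2). -/
theorem poisson_geometric_pmf_recursion {Ω : Type*} [MeasurableSpace Ω] (P : Measure Ω)
    [IsProbabilityMeasure P] (lam p : ℝ) (hlam : 0 < lam) (hp : p ∈ Set.Ioo (0 : ℝ) 1)
    (X Y : Ω → ℕ) (hX : Measurable X) (hY : Measurable Y)
    (hXpmf : ∀ k : ℕ, pm P X k = Real.exp (-lam) * lam ^ k / k.factorial)
    (hYpmf : ∀ k : ℕ, pm P Y k = (1 - p) ^ k * p)
    (hindep : IndepFun X Y P) (j : ℕ) :
    ((j : ℝ) + 1) * pm P (fun ω => X ω + Y ω) (j + 1) =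
      lam * pm P (fun ω => X ω + Y ω) j +
        ∑ k ∈ Finset.range (j + 1), (1 - p) ^ (j - k + 1) * pm P (fun ω => X ω + Y ω) k :=
  poisson_geometric_pmf_recursion_general P lam p X Y hX hY hXpmf hYpmf hindep j
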